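/- arXiv:1502.04271 — 2 statements merged into one kernel-verified Lean document; each statement's English description precedes it below -/
import Mathlib

section
/- If T is a weakly irreducible nonnegative tensor of order k and dimension n, then ρ(T) is the unique eigenvalue of T possessing a strictly positive eigenvector, and that positive eigenvector is unique up to positive scalar multiples. -/
open Finset

/-- A `k`-uniform hypergraph on vertex type `V`. -/
structure UHypergraph (V : Type*) (k : ℕ) where
  edges : Finset (Finset V)
  uniform : ∀ e ∈ edges, e.card = k

namespace UHypergraph

variable {V : Type*} {k : ℕ}

/-- The degree of a vertex: the number of edges containing it. -/
def degree [DecidableEq V] (G : UHypergraph V k) (v : V) : ℕ :=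
  (G.edges.filter fun e => v ∈ e).card

/-- There is a walk from `a` to `b`. -/
def HasWalk (G : UHypergraph V k) (a b : V) : Prop :=
  ∃ (l : ℕ) (v : Fin (l + 1) → V) (e : Fin l → Finset V),
    v 0 = a ∧ v (Fin.last l) = b ∧
    ∀ i : Fin l, e i ∈ G.edges ∧ v i.castSucc ∈ e i ∧ v i.succ ∈ e i

/-- `G` is connected: every two vertices are joined by a walk. -/
def Connected (G : UHypergraph V k) : Prop := ∀ a b : V, G.HasWalk a b

/-- A cycle `v_0 e_1 v_1 ⋯ e_l v_0`: pairwise distinct vertices, pairwise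
distinct edges, with `{v i, v (i+1)} ⊆ e i` (indices mod `len`). -/
structure HCycle (G : UHypergraph V k) where
  len : ℕ
  two_le : 2 ≤ len
  vtx : Fin len → V
  edg : Fin len → Finset V
  vtx_inj : Function.Injective vtx
  edg_inj : Function.Injective edg
  edg_mem : ∀ i, edg i ∈ G.edges
  fst_mem : ∀ i, vtx i ∈ edg i
  snd_mem : ∀ i : Fin len, vtx ⟨((i : ℕ) + 1) % len, Nat.mod_lt _ (by omega)⟩ ∈ edg i

/-- `G` contains no cycle. -/
def Acyclic (G : UHypergraph V k) : Prop := IsEmpty (HCycle G)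

/-- A hypertree is a connected acyclic hypergraph. -/
def IsHypertree (G : UHypergraph V k) : Prop := G.Connected ∧ G.Acyclic

/-- `G` is unicyclic: connected with exactly one cycle (any two cycles have
the same vertex set and the same edge set). -/
def IsUnicyclic (G : UHypergraph V k) : Prop :=
  G.Connected ∧ Nonempty (HCycle G) ∧
    ∀ C C' : HCycle G,
      Set.range C.vtx = Set.range C'.vtx ∧ Set.range C.edg = Set.range C'.edg

/-- The girth: the minimum length of a cycle. -/
noncomputable def girth (G : UHypergraph V k) : ℕ := sInf {l | ∃ C : HCycle G, C.len = l}

/-- `G` is linear: any two distinct edges meet in at most one vertex. -/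
def Linear [DecidableEq V] (G : UHypergraph V k) : Prop :=
  ∀ e ∈ G.edges, ∀ f ∈ G.edges, e ≠ f → (e ∩ f).card ≤ 1

/-- Bicyclic: connected with cyclomatic number `m(k-1) - n + 1 = 2`. -/
def IsBicyclic [Fintype V] (G : UHypergraph V k) : Prop :=
  G.Connected ∧ G.edges.card * (k - 1) = Fintype.card V + 1

end UHypergraph

/-- Isomorphism of `k`-uniform hypergraphs. -/
def HIso {V W : Type*} [DecidableEq W] {k : ℕ} (G : UHypergraph V k) (H : UHypergraph W k) : Prop :=
  ∃ φ : V ≃ W, ∀ e : Finset V, e ∈ G.edges ↔ e.image (φ : V → W) ∈ H.edges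

section Tensor

variable {V : Type*} {k : ℕ}

/-- Prepend `i` to a `(k-1)`-tuple, obtaining a `k`-tuple. -/
def tupleCons (i : V) (g : Fin (k - 1) → V) : Fin k → V :=
  fun j => if h : (j : ℕ) = 0 then i else g ⟨(j : ℕ) - 1, by have := j.isLt; omega⟩

/-- `(T x^{k-1})_i = ∑_{i_2,…,i_k} t_{i i_2 … i_k} x_{i_2} ⋯ x_{i_k}`. -/
def tApply [Fintype V] {R : Type*} [CommSemiring R] (T : (Fin k → V) → R) (x : V → R) (i : V) : R :=
  ∑ g : Fin (k - 1) → V, T (tupleCons i g) * ∏ j, x (g j)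

/-- `lam ∈ ℂ` is an eigenvalue of the real tensor `T`:
`T x^{k-1} = lam x^{[k-1]}` for some `x ≠ 0`. -/
def IsEig [Fintype V] (T : (Fin k → V) → ℝ) (lam : ℂ) : Prop :=
  ∃ x : V → ℂ, x ≠ 0 ∧ ∀ i, tApply (fun f => ((T f : ℝ) : ℂ)) x i = lam * x i ^ (k - 1)

/-- The spectral radius of a tensor: the maximum modulus of its eigenvalues. -/
noncomputable def specRad [Fintype V] (T : (Fin k → V) → ℝ) : ℝ :=
  sSup {r : ℝ | ∃ lam : ℂ, IsEig T lam ∧ ‖lam‖ = r}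

/-- The arc `i → j` of the digraph `G(T)` associated with a nonnegative tensor. -/
def arcRel (T : (Fin k → V) → ℝ) (i j : V) : Prop :=
  ∃ g : Fin (k - 1) → V, 0 < T (tupleCons i g) ∧ ∃ l, g l = j

/-- `T` is weakly irreducible: the associated digraph is strongly connected. -/
def WeaklyIrreducible (T : (Fin k → V) → ℝ) : Prop :=
  ∀ a b : V, Relation.ReflTransGen (arcRel T) a b

/-- The adjacency tensor of a `k`-uniform hypergraph: entry `1/(k-1)!` on
tuples of distinct vertices forming an edge, `0` otherwise. -/
noncomputable def adjTensor [Fintype V] [DecidableEq V] (G : UHypergraph V k) : (Fin k → V) → ℝ :=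
  fun f => if Function.Injective f ∧ Finset.image f Finset.univ ∈ G.edges
    then ((Nat.factorial (k - 1) : ℝ))⁻¹ else 0

/-- The spectral radius of a hypergraph. -/
noncomputable def hSpecRad [Fintype V] [DecidableEq V] (G : UHypergraph V k) : ℝ :=
  specRad (adjTensor G)

/-- `x` is a Perron vector of `G`: a positive eigenvector for `ρ(G)`. -/
def IsPerron [Fintype V] [DecidableEq V] (G : UHypergraph V k) (x : V → ℝ) : Prop :=
  (∀ v, 0 < x v) ∧ ∀ i, tApply (adjTensor G) x i = hSpecRad G * x i ^ (k - 1)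

end Tensor

section Shapes

variable {V : Type*} {k : ℕ}

/-- A hyperstar: all edges share a common vertex `c`, and pairwise meet exactly in `c`. -/
def IsHyperstar [DecidableEq V] (G : UHypergraph V k) : Prop :=
  G.Connected ∧ ∃ c : V, (∀ e ∈ G.edges, c ∈ e) ∧
    ∀ e ∈ G.edges, ∀ f ∈ G.edges, e ≠ f → e ∩ f = {c}

/-- `H` is the `k`-th power of the simple graph (2-uniform hypergraph) `B`:
each edge of `B` is enlarged by `k-2` new vertices, all distinct. -/
def IsPowerOf [DecidableEq V] {W : Type*} (H : UHypergraph V k) (B : UHypergraph W 2) : Prop :=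
  ∃ (ι : W ↪ V) (ν : ({e // e ∈ B.edges} × Fin (k - 2)) ↪ V),
    (∀ w p, ι w ≠ ν p) ∧
    (∀ v : V, (∃ w, ι w = v) ∨ (∃ p, ν p = v)) ∧
    H.edges = B.edges.attach.image
      (fun e => e.1.map ι ∪ Finset.image (fun j : Fin (k - 2) => ν (e, j)) Finset.univ)

/-- `H` is a power hypergraph: the `k`-th power of some simple graph. -/
def IsPowerHG [DecidableEq V] (H : UHypergraph V k) : Prop :=
  ∃ (W : Type) (B : UHypergraph W 2), IsPowerOf H B

/-- The shape of `S_{m,g}^k`: a linear unicyclic hypergraph with `m` edges and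
girth `g`, whose cycle has length `g`, all non-cycle edges being pendant edges
at a common cycle vertex `u` (their other vertices having degree one). -/
def IsSmg [DecidableEq V] (g m : ℕ) (G : UHypergraph V k) : Prop :=
  G.IsUnicyclic ∧ G.Linear ∧ G.edges.card = m ∧ G.girth = g ∧
    ∃ (C : UHypergraph.HCycle G) (u : V), C.len = g ∧ (∃ i, C.vtx i = u) ∧
      ∀ f ∈ G.edges, (∃ i, C.edg i = f) ∨
        (u ∈ f ∧ ∀ w ∈ f, w ≠ u → G.degree w = 1)

/-- The shape of `B_m^P`: the `k`-th power of `K_4` minus an edge (two triangles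
on `a,b,c` and `a,b,d` sharing base `a b`) with a hyperstar of `m - 5` edges
attached at the degree-3 vertex `a`. -/
def IsBmP [DecidableEq V] (m : ℕ) (G : UHypergraph V k) : Prop :=
  G.Connected ∧ G.edges.card = m ∧
    ∃ (a b c d : V) (f : Fin 5 → Finset V),
      (a ≠ b ∧ a ≠ c ∧ a ≠ d ∧ b ≠ c ∧ b ≠ d ∧ c ≠ d) ∧
      Function.Injective f ∧ (∀ i, f i ∈ G.edges) ∧
      f 0 ∩ {a, b, c, d} = {a, b} ∧
      f 1 ∩ {a, b, c, d} = {a, c} ∧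
      f 2 ∩ {a, b, c, d} = {b, c} ∧
      f 3 ∩ {a, b, c, d} = {a, d} ∧
      f 4 ∩ {a, b, c, d} = {b, d} ∧
      (∀ i, ∀ w ∈ f i, w ∉ ({a, b, c, d} : Finset V) → G.degree w = 1) ∧
      (∀ e ∈ G.edges, (∀ i, f i ≠ e) → a ∈ e ∧ ∀ w ∈ e, w ≠ a → G.degree w = 1)

/-- The core `G_5`: an edge `e ⊇ {v1,v2,v3}` and three further edges joining
`v1, v2, v3` to a common vertex `w` outside `e`; all vertices of these four
edges other than `w, v1, v2, v3` have degree one. -/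
def G5Core [DecidableEq V] (G : UHypergraph V k) (w v1 v2 v3 : V) (e g1 g2 g3 : Finset V) : Prop :=
  (w ≠ v1 ∧ w ≠ v2 ∧ w ≠ v3 ∧ v1 ≠ v2 ∧ v1 ≠ v3 ∧ v2 ≠ v3) ∧
  (e ∈ G.edges ∧ g1 ∈ G.edges ∧ g2 ∈ G.edges ∧ g3 ∈ G.edges) ∧
  (e ≠ g1 ∧ e ≠ g2 ∧ e ≠ g3 ∧ g1 ≠ g2 ∧ g1 ≠ g3 ∧ g2 ≠ g3) ∧
  e ∩ {w, v1, v2, v3} = {v1, v2, v3} ∧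
  g1 ∩ {w, v1, v2, v3} = {w, v1} ∧
  g2 ∩ {w, v1, v2, v3} = {w, v2} ∧
  g3 ∩ {w, v1, v2, v3} = {w, v3} ∧
  (∀ f ∈ ({e, g1, g2, g3} : Finset (Finset V)), ∀ x ∈ f, x ∉ ({w, v1, v2, v3} : Finset V) →
    G.degree x = 1)

/-- `B_m^L(1)`: `G_5` with a hyperstar of `m-4` edges attached at the degree-3 vertex `w`. -/
def IsBmL1 [DecidableEq V] (m : ℕ) (G : UHypergraph V k) : Prop :=
  G.Connected ∧ G.edges.card = m ∧
    ∃ (w v1 v2 v3 : V) (e g1 g2 g3 : Finset V), G5Core G w v1 v2 v3 e g1 g2 g3 ∧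
      ∀ f ∈ G.edges, f ∉ ({e, g1, g2, g3} : Finset (Finset V)) →
        w ∈ f ∧ ∀ x ∈ f, x ≠ w → G.degree x = 1

/-- `B_m^L(2)`: `G_5` with a hyperstar of `m-4` edges attached at a degree-2 vertex `v1`. -/
def IsBmL2 [DecidableEq V] (m : ℕ) (G : UHypergraph V k) : Prop :=
  G.Connected ∧ G.edges.card = m ∧
    ∃ (w v1 v2 v3 : V) (e g1 g2 g3 : Finset V), G5Core G w v1 v2 v3 e g1 g2 g3 ∧
      ∀ f ∈ G.edges, f ∉ ({e, g1, g2, g3} : Finset (Finset V)) →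
        v1 ∈ f ∧ ∀ x ∈ f, x ≠ v1 → G.degree x = 1

/-- The support (vertex set) of a set of edges. -/
def esupp {V : Type*} [DecidableEq V] (E : Finset (Finset V)) : Finset V := E.sup id

end Shapes

open Filter Topology

/-!
A positive eigenvector is a minimizer of the Collatz–Wielandt function
`x ↦ maxᵢ (T x^{k-1})ᵢ / xᵢ^{k-1}` on the positive orthant. Weak irreducibility makes all positive
`x` with bounded Collatz–Wielandt value uniformly comparable (`xⱼ ≤ C xᵢ`, by following paths in
`G(T)`), so by scale invariance the minimum `μ` is attained on a compact cube. Among the `x > 0`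
with `T x^{k-1} ≤ μ x^{[k-1]}`, one with the fewest equalities satisfies all of them: otherwise
shrinking the slack coordinates slightly, along an arc leaving the set of equalities, destroys an
equality without creating one.

If `x > 0` has eigenvalue `μ` and `w` is an eigenvector for `λ`, then
`‖λ‖ |w|^{[k-1]} ≤ T |w|^{k-1}`; comparing `|w|` with `(maxᵢ |wᵢ| / xᵢ) x` at a maximizing
coordinate gives `‖λ‖ ≤ μ`, so `μ = ρ(T)`. For two positive eigenvectors `x, y` and
`c = minᵢ yᵢ / xᵢ`, the set where `y = c x` is closed under arcs, since `T` is strictly monotone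
along arcs; hence `y = c x`.
-/

section TensorApply

variable {ι : Type*} [Fintype ι] {k : ℕ} {T : (Fin k → ι) → ℝ}

lemma tApply_nonneg (hT : ∀ f, 0 ≤ T f) {x : ι → ℝ} (hx : 0 ≤ x) (i : ι) :
    0 ≤ tApply T x i :=
  sum_nonneg fun _ _ => mul_nonneg (hT _) (prod_nonneg fun _ _ => hx _)

lemma tApply_mono (hT : ∀ f, 0 ≤ T f) {x y : ι → ℝ} (hx : 0 ≤ x) (hxy : x ≤ y) (i : ι) :
    tApply T x i ≤ tApply T y i :=
  sum_le_sum fun _ _ =>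
    mul_le_mul_of_nonneg_left (prod_le_prod (fun _ _ => hx _) fun _ _ => hxy _) (hT _)

lemma tApply_lt_tApply_of_arcRel (hT : ∀ f, 0 ≤ T f) {x y : ι → ℝ} (hx : ∀ l, 0 < x l)
    (hxy : x ≤ y) {i j : ι} (hij : arcRel T i j) (hj : x j < y j) :
    tApply T x i < tApply T y i := by
  obtain ⟨g, hg, l, rfl⟩ := hij
  refine sum_lt_sum (fun _ _ => ?_) ⟨g, mem_univ _, ?_⟩
  · exact mul_le_mul_of_nonneg_left (prod_le_prod (fun _ _ => (hx _).le) fun _ _ => hxy _) (hT _)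
  · exact mul_lt_mul_of_pos_left
      (prod_lt_prod (fun _ _ => hx _) (fun _ _ => hxy _) ⟨l, mem_univ _, hj⟩) hg

lemma tApply_smul (c : ℝ) (x : ι → ℝ) (i : ι) :
    tApply T (c • x) i = c ^ (k - 1) * tApply T x i := by
  simp only [tApply, mul_sum, Pi.smul_apply, smul_eq_mul, prod_mul_distrib, prod_const,
    card_univ, Fintype.card_fin]
  exact sum_congr rfl fun _ _ => by ring

lemma continuous_tApply (i : ι) : Continuous fun x : ι → ℝ => tApply T x i := by
  unfold tApply
  fun_prop

lemma tApply_ofReal (x : ι → ℝ) (i : ι) :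
    tApply (fun f => (T f : ℂ)) (fun j => (x j : ℂ)) i = tApply T x i := by
  simp [tApply]

lemma norm_tApply_le (hT : ∀ f, 0 ≤ T f) (w : ι → ℂ) (i : ι) :
    ‖tApply (fun f => (T f : ℂ)) w i‖ ≤ tApply T (fun j => ‖w j‖) i :=
  (norm_sum_le _ _).trans_eq <| sum_congr rfl fun _ _ => by
    rw [norm_mul, norm_prod, Complex.norm_real, Real.norm_of_nonneg (hT _)]

end TensorApply

lemma Relation.ReflTransGen.exists_rel_of_mem_of_notMem {α : Type*} {r : α → α → Prop}
    {a b : α} {s : Set α} (h : Relation.ReflTransGen r a b) (ha : a ∈ s) (hb : b ∉ s) :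
    ∃ i ∈ s, ∃ j ∉ s, r i j := by
  induction h with
  | refl => exact absurd ha hb
  | @tail c d _ hcd ih =>
    by_cases hc : c ∈ s
    exacts [⟨c, hc, d, hb, hcd⟩, ih hc]

section PositiveEigenvector

variable {ι : Type*} [Fintype ι] {k : ℕ} {T : (Fin k → ι) → ℝ}

lemma le_of_le_tApply (hT : ∀ f, 0 ≤ T f) {x z : ι → ℝ} {lam μ : ℝ} (hx : ∀ i, 0 < x i)
    (hxlam : ∀ i, tApply T x i = lam * x i ^ (k - 1)) (hz : 0 ≤ z) (hz0 : z ≠ 0)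
    (hzμ : ∀ i, μ * z i ^ (k - 1) ≤ tApply T z i) : μ ≤ lam := by
  obtain ⟨j, hj⟩ := Function.ne_iff.1 hz0
  have : Nonempty ι := ⟨j⟩
  obtain ⟨i, hi⟩ := Finite.exists_max fun l => z l / x l
  set t := z i / x i
  have hzt : z ≤ t • x := fun l => (div_le_iff₀ (hx l)).1 (hi l)
  have hzi : z i = t * x i := (div_mul_cancel₀ _ (hx i).ne').symm
  have ht : 0 < t := pos_of_mul_pos_left (((hz j).lt_of_ne' hj).trans_le (hzt j)) (hx j).le
  have key : μ * z i ^ (k - 1) ≤ lam * z i ^ (k - 1) := calc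
    μ * z i ^ (k - 1) ≤ tApply T z i := hzμ i
    _ ≤ tApply T (t • x) i := tApply_mono hT hz hzt i
    _ = lam * z i ^ (k - 1) := by rw [tApply_smul, hxlam, hzi, mul_pow]; ring
  exact le_of_mul_le_mul_right key (pow_pos (hzi ▸ mul_pos ht (hx i)) _)

lemma specRad_eq_of_pos_eigenvector [Nonempty ι] (hT : ∀ f, 0 ≤ T f) {x : ι → ℝ} {μ : ℝ}
    (hx : ∀ i, 0 < x i) (hxμ : ∀ i, tApply T x i = μ * x i ^ (k - 1)) : specRad T = μ := by
  obtain ⟨i⟩ := ‹Nonempty ι›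
  have hμ : 0 ≤ μ := (mul_nonneg_iff_of_pos_right (pow_pos (hx i) _)).1
    (hxμ i ▸ tApply_nonneg hT (fun j => (hx j).le) i)
  have hEig : IsEig T μ :=
    ⟨fun j => x j, fun h => (hx i).ne' (by simpa using congr_fun h i),
      fun j => by rw [tApply_ofReal, hxμ]; push_cast; rfl⟩
  have hbound : ∀ lam, IsEig T lam → ‖lam‖ ≤ μ := by
    rintro lam ⟨w, hw0, hw⟩
    refine le_of_le_tApply hT hx hxμ (fun j => norm_nonneg (w j)) (fun h => hw0 ?_) fun j => ?_
    · funext j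
      simpa using congr_fun h j
    · simpa [hw j, norm_pow] using norm_tApply_le hT w j
  refine IsGreatest.csSup_eq ⟨⟨μ, hEig, by simp [hμ]⟩, ?_⟩
  rintro _ ⟨lam, hlam, rfl⟩
  exact hbound lam hlam

lemma exists_pos_smul_eq_of_pos_eigenvector [Nonempty ι] (hT : ∀ f, 0 ≤ T f)
    (hirr : WeaklyIrreducible T) {x y : ι → ℝ} {lam : ℝ} (hx : ∀ i, 0 < x i)
    (hy : ∀ i, 0 < y i) (hxlam : ∀ i, tApply T x i = lam * x i ^ (k - 1))
    (hylam : ∀ i, tApply T y i = lam * y i ^ (k - 1)) : ∃ c : ℝ, 0 < c ∧ y = c • x := by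
  obtain ⟨a, ha⟩ := Finite.exists_min fun l => y l / x l
  set c := y a / x a
  have hcx : c • x ≤ y := fun l => (le_div_iff₀ (hx l)).1 (ha l)
  refine ⟨c, div_pos (hy a) (hx a), funext fun b => by_contra fun hb => ?_⟩
  obtain ⟨i, hi, j, hj, hij⟩ := (hirr a b).exists_rel_of_mem_of_notMem (s := {l | y l = c * x l})
    (div_mul_cancel₀ _ (hx a).ne').symm hb
  have hlt := tApply_lt_tApply_of_arcRel (x := c • x) hT
    (fun l => mul_pos (div_pos (hy a) (hx a)) (hx l)) hcx hij ((hcx j).lt_of_ne (Ne.symm hj))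
  rw [tApply_smul, hxlam, hylam, show y i = c * x i from hi, mul_pow] at hlt
  exact hlt.ne (by ring)

end PositiveEigenvector

section Reachability

variable {ι : Type*} [Fintype ι] {k : ℕ} {T : (Fin k → ι) → ℝ}

lemma mul_le_tApply_of_one_le (hT : ∀ f, 0 ≤ T f) {z : ι → ℝ} (hz : ∀ l, 1 ≤ z l) (i : ι)
    (g : Fin (k - 1) → ι) (l : Fin (k - 1)) : T (tupleCons i g) * z (g l) ≤ tApply T z i :=
  calc T (tupleCons i g) * z (g l) ≤ T (tupleCons i g) * ∏ j, z (g j) :=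
        mul_le_mul_of_nonneg_left (Multiset.mem_le_prod_of_one_le (fun j => hz (g j)) (mem_univ l))
          (hT _)
    _ ≤ tApply T z i :=
        single_le_sum (f := fun g => T (tupleCons i g) * ∏ j, z (g j))
          (fun _ _ => mul_nonneg (hT _) (prod_nonneg fun _ _ => zero_le_one.trans (hz _)))
          (mem_univ g)

lemma exists_apply_le_of_reflTransGen (hT : ∀ f, 0 ≤ T f) {γ : ℝ} {a b : ι}
    (h : Relation.ReflTransGen (arcRel T) a b) :
    ∃ C, ∀ z : ι → ℝ, (∀ i, 1 ≤ z i) → (∀ i, tApply T z i ≤ γ * z i ^ (k - 1)) →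
      z a = 1 → z b ≤ C := by
  induction h with
  | refl => exact ⟨1, fun z _ _ hza => hza.le⟩
  | @tail c _ _ hcb ih =>
    obtain ⟨C, hC⟩ := ih
    obtain ⟨g, hg, l, rfl⟩ := hcb
    refine ⟨γ / T (tupleCons c g) * C ^ (k - 1), fun z hz hzγ hza => ?_⟩
    have hz0 : 0 ≤ z := fun i => zero_le_one.trans (hz i)
    have hγ : 0 ≤ γ := nonneg_of_mul_nonneg_left
      ((tApply_nonneg hT hz0 c).trans (hzγ c)) (pow_pos (zero_lt_one.trans_le (hz c)) _)
    rw [div_mul_eq_mul_div, le_div_iff₀ hg, mul_comm]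
    calc T (tupleCons c g) * z (g l) ≤ tApply T z c := mul_le_tApply_of_one_le hT hz c g l
      _ ≤ γ * z c ^ (k - 1) := hzγ c
      _ ≤ γ * C ^ (k - 1) := by gcongr; exacts [hz0 c, hC z hz hzγ hza]

end Reachability

section Descent

variable {ι : Type*} [Fintype ι] {k : ℕ} {T : (Fin k → ι) → ℝ}

open Classical in
noncomputable def tightIndices (T : (Fin k → ι) → ℝ) (μ : ℝ) (x : ι → ℝ) : Finset ι :=
  univ.filter fun i => tApply T x i = μ * x i ^ (k - 1)

lemma mem_tightIndices {μ : ℝ} {x : ι → ℝ} {i : ι} :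
    i ∈ tightIndices T μ x ↔ tApply T x i = μ * x i ^ (k - 1) := by
  simp [tightIndices]

lemma exists_tightIndices_ssubset (hT : ∀ f, 0 ≤ T f) {x : ι → ℝ} {μ : ℝ} (hx : ∀ l, 0 < x l)
    (hxμ : ∀ l, tApply T x l ≤ μ * x l ^ (k - 1)) {i j : ι} (hi : i ∈ tightIndices T μ x)
    (hj : j ∉ tightIndices T μ x) (hij : arcRel T i j) :
    ∃ y : ι → ℝ, (∀ l, 0 < y l) ∧ (∀ l, tApply T y l ≤ μ * y l ^ (k - 1)) ∧
      tightIndices T μ y ⊂ tightIndices T μ x := by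
  classical
  set E := tightIndices T μ x
  have hslack : ∀ᶠ t in 𝓝 (1 : ℝ), ∀ l ∉ E, tApply T x l < μ * (t * x l) ^ (k - 1) := by
    refine eventually_all.2 fun l => ?_
    by_cases hl : l ∈ E
    · exact .of_forall fun _ h => absurd hl h
    · refine (continuousAt_const.eventually_lt (by fun_prop) ?_).mono fun _ h _ => h
      simpa using (hxμ l).lt_of_ne (mt mem_tightIndices.2 hl)
  obtain ⟨t, hslack, ht0, ht1⟩ :=
    ((hslack.filter_mono nhdsWithin_le_nhds).and (Ioo_mem_nhdsLT zero_lt_one)).exists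
  set y : ι → ℝ := fun l => if l ∈ E then x l else t * x l
  have hy : ∀ l, 0 < y l := fun l => by
    by_cases hl : l ∈ E <;> simp [y, hl, hx l, mul_pos ht0 (hx l)]
  have hyx : y ≤ x := fun l => by
    by_cases hl : l ∈ E <;> simp [y, hl, mul_le_of_le_one_left (hx l).le ht1.le]
  have hyE : ∀ l ∈ E, tApply T y l ≤ μ * y l ^ (k - 1) := fun l hl => by
    simpa [y, hl, mem_tightIndices.1 hl] using tApply_mono hT (fun l => (hy l).le) hyx l
  have hyi : tApply T y i < μ * y i ^ (k - 1) := by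
    simpa [y, hi, mem_tightIndices.1 hi] using tApply_lt_tApply_of_arcRel hT hy hyx hij
      (by simpa [y, hj] using mul_lt_of_lt_one_left (hx j) ht1)
  have hyc : ∀ l ∉ E, tApply T y l < μ * y l ^ (k - 1) := fun l hl => by
    simpa [y, hl] using (tApply_mono hT (fun l => (hy l).le) hyx l).trans_lt (hslack l hl)
  refine ⟨y, hy, fun l => ?_, ?_⟩
  · by_cases hl : l ∈ E
    exacts [hyE l hl, (hyc l hl).le]
  · refine Finset.ssubset_of_subset_of_ssubset (fun l hl => mem_erase.2 ⟨?_, ?_⟩) (erase_ssubset hi)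
    · rintro rfl
      exact hyi.ne (mem_tightIndices.1 hl)
    · by_contra hlE
      exact (hyc l hlE).ne (mem_tightIndices.1 hl)

lemma exists_pos_eigenvector_of_tApply_le (hT : ∀ f, 0 ≤ T f) (hirr : WeaklyIrreducible T)
    {μ : ℝ} (hμ : ∀ y : ι → ℝ, (∀ i, 0 < y i) → ¬ ∀ i, tApply T y i < μ * y i ^ (k - 1))
    {x : ι → ℝ} (hx : ∀ i, 0 < x i) (hxμ : ∀ i, tApply T x i ≤ μ * x i ^ (k - 1)) :
    ∃ y : ι → ℝ, (∀ i, 0 < y i) ∧ ∀ i, tApply T y i = μ * y i ^ (k - 1) := by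
  induction hcard : (tightIndices T μ x).card using Nat.strong_induction_on generalizing x with
  | _ m ih =>
  by_cases hall : ∀ i, i ∈ tightIndices T μ x
  · exact ⟨x, hx, fun i => mem_tightIndices.1 (hall i)⟩
  push Not at hall
  obtain ⟨b, hb⟩ := hall
  obtain ⟨a, ha⟩ : ∃ a, a ∈ tightIndices T μ x := by
    by_contra! h
    exact hμ x hx fun i => (hxμ i).lt_of_ne fun he => h i (mem_tightIndices.2 he)
  obtain ⟨i, hi, j, hj, hij⟩ :=
    (hirr a b).exists_rel_of_mem_of_notMem (s := ↑(tightIndices T μ x)) ha hb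
  obtain ⟨y, hy, hyμ, hyx⟩ := exists_tightIndices_ssubset hT hx hxμ hi hj hij
  exact ih _ (hcard ▸ card_lt_card hyx) hy hyμ rfl

end Descent

section CollatzWielandt

variable {ι : Type*} [Fintype ι] [Nonempty ι] {k : ℕ} {T : (Fin k → ι) → ℝ}

noncomputable def collatzWielandt (T : (Fin k → ι) → ℝ) (x : ι → ℝ) : ℝ :=
  univ.sup' univ_nonempty fun i => tApply T x i / x i ^ (k - 1)

lemma collatzWielandt_le_iff {x : ι → ℝ} (hx : ∀ i, 0 < x i) {μ : ℝ} :
    collatzWielandt T x ≤ μ ↔ ∀ i, tApply T x i ≤ μ * x i ^ (k - 1) := by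
  simp [collatzWielandt, div_le_iff₀ (pow_pos (hx _) _)]

lemma collatzWielandt_lt_iff {x : ι → ℝ} (hx : ∀ i, 0 < x i) {μ : ℝ} :
    collatzWielandt T x < μ ↔ ∀ i, tApply T x i < μ * x i ^ (k - 1) := by
  simp [collatzWielandt, div_lt_iff₀ (pow_pos (hx _) _)]

lemma collatzWielandt_smul {c : ℝ} (hc : 0 < c) (x : ι → ℝ) :
    collatzWielandt T (c • x) = collatzWielandt T x := by
  simp only [collatzWielandt, tApply_smul, Pi.smul_apply, smul_eq_mul, mul_pow,
    mul_div_mul_left _ _ (pow_ne_zero _ hc.ne')]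

lemma continuousOn_collatzWielandt : ContinuousOn (collatzWielandt T) {x | ∀ i, 0 < x i} :=
  ContinuousOn.finset_sup'_apply _ fun i _ =>
    (continuous_tApply i).continuousOn.div (by fun_prop) fun _ hx => (pow_pos (hx i) _).ne'

lemma WeaklyIrreducible.exists_le_mul_of_collatzWielandt_le (hT : ∀ f, 0 ≤ T f)
    (hirr : WeaklyIrreducible T) (γ : ℝ) :
    ∃ C, 1 ≤ C ∧ ∀ x : ι → ℝ, (∀ i, 0 < x i) → collatzWielandt T x ≤ γ →
      ∀ i j, x j ≤ C * x i := by
  choose C hC using fun p : ι × ι => exists_apply_le_of_reflTransGen hT (γ := γ) (hirr p.1 p.2)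
  obtain ⟨p₀, hp₀⟩ := Finite.exists_max C
  refine ⟨max (C p₀) 1, le_max_right _ _, fun x hx hxγ i j => ?_⟩
  obtain ⟨a, ha⟩ := Finite.exists_min x
  set z := (x a)⁻¹ • x
  have hz : ∀ l, 1 ≤ z l := fun l => by simpa [z, le_inv_mul_iff₀ (hx a)] using ha l
  have hzγ : ∀ l, tApply T z l ≤ γ * z l ^ (k - 1) :=
    (collatzWielandt_le_iff fun l => zero_lt_one.trans_le (hz l)).1
      (by rwa [collatzWielandt_smul (inv_pos.2 (hx a))])
  have hzj : z j ≤ max (C p₀) 1 :=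
    (hC (a, j) z hz hzγ (inv_mul_cancel₀ (hx a).ne')).trans ((hp₀ (a, j)).trans (le_max_left _ _))
  calc x j = x a * z j := by simp [z, (hx a).ne']
    _ ≤ x i * max (C p₀) 1 := mul_le_mul (ha i) hzj (zero_le_one.trans (hz j)) (hx i).le
    _ = max (C p₀) 1 * x i := mul_comm _ _

lemma exists_forall_collatzWielandt_le (hT : ∀ f, 0 ≤ T f) (hirr : WeaklyIrreducible T) :
    ∃ x : ι → ℝ, (∀ i, 0 < x i) ∧
      ∀ y : ι → ℝ, (∀ i, 0 < y i) → collatzWielandt T x ≤ collatzWielandt T y := by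
  obtain ⟨C, hC, hCx⟩ := hirr.exists_le_mul_of_collatzWielandt_le hT (collatzWielandt T 1)
  set Q : Set (ι → ℝ) := Set.univ.pi fun _ => Set.Icc C⁻¹ 1
  have hQ : Q ⊆ {x | ∀ i, 0 < x i} := fun x hx i =>
    (inv_pos.2 (zero_lt_one.trans_le hC)).trans_le (hx i trivial).1
  have h1Q : (1 : ι → ℝ) ∈ Q := fun i _ => ⟨inv_le_one_of_one_le₀ hC, le_rfl⟩
  obtain ⟨x, hxQ, hxmin⟩ := (isCompact_univ_pi fun _ => isCompact_Icc).exists_isMinOn ⟨1, h1Q⟩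
    (continuousOn_collatzWielandt.mono hQ)
  refine ⟨x, hQ hxQ, fun y hy => ?_⟩
  rcases le_total (collatzWielandt T 1) (collatzWielandt T y) with h | h
  · exact (isMinOn_iff.1 hxmin 1 h1Q).trans h
  obtain ⟨b, hb⟩ := Finite.exists_max y
  have hyQ : (y b)⁻¹ • y ∈ Q := fun i _ => by
    simp only [Pi.smul_apply, smul_eq_mul, Set.mem_Icc, inv_mul_le_one₀ (hy b)]
    refine ⟨?_, hb i⟩
    rw [le_inv_mul_iff₀ (hy b), mul_inv_le_iff₀ (zero_lt_one.trans_le hC), mul_comm]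
    exact hCx y hy h i b
  simpa [collatzWielandt_smul (inv_pos.2 (hy b))] using isMinOn_iff.1 hxmin _ hyQ

lemma exists_pos_eigenvector (hT : ∀ f, 0 ≤ T f) (hirr : WeaklyIrreducible T) :
    ∃ (x : ι → ℝ) (μ : ℝ), (∀ i, 0 < x i) ∧ ∀ i, tApply T x i = μ * x i ^ (k - 1) := by
  obtain ⟨x, hx, hmin⟩ := exists_forall_collatzWielandt_le hT hirr
  obtain ⟨y, hy, hyμ⟩ := exists_pos_eigenvector_of_tApply_le hT hirr
    (fun y hy hlt => (hmin y hy).not_gt ((collatzWielandt_lt_iff hy).2 hlt)) hx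
    ((collatzWielandt_le_iff hx).1 le_rfl)
  exact ⟨y, _, hy, hyμ⟩

end CollatzWielandt

theorem specRad_unique_Hplusplus_general {k n : ℕ} (hn : 1 ≤ n)
    (T : (Fin k → Fin n) → ℝ) (hT : ∀ f, 0 ≤ T f) (hirr : WeaklyIrreducible T) :
    (∃ x : Fin n → ℝ, (∀ i, 0 < x i) ∧
        ∀ i, tApply T x i = specRad T * x i ^ (k - 1)) ∧
    (∀ (lam : ℝ) (x : Fin n → ℝ), (∀ i, 0 < x i) →
        (∀ i, tApply T x i = lam * x i ^ (k - 1)) → lam = specRad T) ∧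
    (∀ x y : Fin n → ℝ, (∀ i, 0 < x i) → (∀ i, 0 < y i) →
        (∀ i, tApply T x i = specRad T * x i ^ (k - 1)) →
        (∀ i, tApply T y i = specRad T * y i ^ (k - 1)) →
        ∃ c : ℝ, 0 < c ∧ y = c • x) := by
  have : Nonempty (Fin n) := ⟨⟨0, hn⟩⟩
  obtain ⟨x, μ, hx, hxμ⟩ := exists_pos_eigenvector hT hirr
  have hρ : specRad T = μ := specRad_eq_of_pos_eigenvector hT hx hxμ
  exact ⟨⟨x, hx, hρ ▸ hxμ⟩,
    fun _ y hy hy' => (specRad_eq_of_pos_eigenvector hT hy hy').symm,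
    fun _ _ hy hz hy' hz' => exists_pos_smul_eq_of_pos_eigenvector hT hirr hy hz hy' hz'⟩

/-- (Friedland–Gaubert–Han) If `T` is a weakly irreducible
nonnegative tensor, then `ρ(T)` is the unique eigenvalue possessing a strictly
positive eigenvector, and that eigenvector is unique up to positive scaling. -/
theorem specRad_unique_Hplusplus {k n : ℕ} (hk : 2 ≤ k) (hn : 1 ≤ n)
    (T : (Fin k → Fin n) → ℝ) (hT : ∀ f, 0 ≤ T f) (hirr : WeaklyIrreducible T) :
    (∃ x : Fin n → ℝ, (∀ i, 0 < x i) ∧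
        ∀ i, tApply T x i = specRad T * x i ^ (k - 1)) ∧
    (∀ (lam : ℝ) (x : Fin n → ℝ), (∀ i, 0 < x i) →
        (∀ i, tApply T x i = lam * x i ^ (k - 1)) → lam = specRad T) ∧
    (∀ x y : Fin n → ℝ, (∀ i, 0 < x i) → (∀ i, 0 < y i) →
        (∀ i, tApply T x i = specRad T * x i ^ (k - 1)) →
        (∀ i, tApply T y i = specRad T * y i ^ (k - 1)) →
        ∃ c : ℝ, 0 < c ∧ y = c • x) :=
  specRad_unique_Hplusplus_general hn T hT hirr
end

section
/- Let G = G_1(v_2) * G_2(u) and G' = G_1(v_1) * G_2(u) be connected k-uniform hypergraphs, where G' is obtained from G by relocating the sub-hypergraph G_2 rooted at u from v_2 to v_1. If there exists a Perron vector x of G such that x_{v_1} ≥ x_{v_2}, then ρ(G') > ρ(G). -/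
open Finset

/-!
`k` times the maximum of the Lagrangian `L_H(y) = ∑_e ∏_{v ∈ e} y_v` over the nonnegative unit
sphere `∑_v y_v ^ k = 1` is an eigenvalue of `H` with a nonnegative eigenvector: moving a little
`k`-th power mass from one coordinate to another cannot increase `L_H`, and to first order this is
the eigenvalue equation. Hence if a nonnegative `x` satisfies `k L_H(x) ≥ ρ ∑_v x_v ^ k` without
being an eigenvector for `ρ`, then `ρ < ρ(H)`.

For the Perron vector `x` of `G`, `k L_G(x) = ρ(G) ∑_v x_v ^ k`. Relocation replaces `x_{v₂}` by
`x_{v₁} ≥ x_{v₂}` in the terms of the moved edges, so `L_{G'}(x) ≥ L_G(x)`, while at `v₁` the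
moved edges make `(A_{G'} x^{k-1})_{v₁}` exceed `(A_G x^{k-1})_{v₁} = ρ(G) x_{v₁}^{k-1}`, so `x`
is not an eigenvector of `G'` for `ρ(G)`.
-/

namespace UHypergraph

variable {V : Type*} {k : ℕ}

def lagrangian (H : UHypergraph V k) (y : V → ℝ) : ℝ := ∑ e ∈ H.edges, ∏ v ∈ e, y v

/-- The partial derivative `∂ L_H / ∂ y_i`, which is also `(A_H y^{k-1})_i` (`tApply_adjTensor`). -/
def linkSum [DecidableEq V] (H : UHypergraph V k) (y : V → ℝ) (i : V) : ℝ :=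
  ∑ e ∈ H.edges with i ∈ e, ∏ v ∈ e.erase i, y v

end UHypergraph

open UHypergraph

section Tensor

variable {V : Type*} {n : ℕ}

theorem tupleCons_eq_cons (i : V) (g : Fin (n + 1 - 1) → V) : tupleCons i g = Fin.cons i g := by
  funext j
  cases j using Fin.cases <;> simp [tupleCons]

theorem Fin.image_cons_univ [DecidableEq V] (i : V) (g : Fin n → V) :
    image (Fin.cons i g : Fin (n + 1) → V) univ = insert i (image g univ) := by
  ext v
  simp [Fin.exists_fin_succ, eq_comm]

theorem card_filter_injective_image_eq [Fintype V] [DecidableEq V] (s : Finset V)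
    (hs : s.card = n) :
    #{g : Fin n → V | Function.Injective g ∧ image g univ = s} = n.factorial := by
  let e : {g : Fin n → V // Function.Injective g ∧ image g univ = s} ≃ (Fin n ↪ s) :=
    { toFun g := ⟨fun j => ⟨g.1 j, g.2.2.subset (mem_image_of_mem _ (mem_univ j))⟩,
        fun a b hab => g.2.1 (Subtype.ext_iff.mp hab)⟩
      invFun f := ⟨fun j => f j, fun a b hab => f.injective (Subtype.ext hab),
        eq_of_subset_of_card_le
          (fun v hv => by obtain ⟨j, -, rfl⟩ := mem_image.mp hv; exact (f j).2)
          (by rw [hs, card_image_of_injective _ fun a b hab => f.injective (Subtype.ext hab),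
            card_univ, Fintype.card_fin])⟩
      left_inv _ := rfl
      right_inv _ := rfl }
  rw [← Fintype.card_subtype, Fintype.card_congr e, Fintype.card_embedding_eq, Fintype.card_coe,
    Fintype.card_fin, hs, Nat.descFactorial_self]

theorem tApply_adjTensor [Fintype V] [DecidableEq V] {k : ℕ} (hk : 0 < k)
    (H : UHypergraph V k) (y : V → ℝ) (i : V) : tApply (adjTensor H) y i = H.linkSum y i := by
  obtain ⟨n, rfl⟩ : ∃ n, k = n + 1 := ⟨k - 1, by omega⟩
  set c : ℝ := ((n.factorial : ℕ) : ℝ)⁻¹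
  let P : (Fin n → V) → Prop := fun g =>
    (Function.Injective g ∧ i ∉ image g univ) ∧ insert i (image g univ) ∈ H.edges
  have hT : ∀ g : Fin n → V, adjTensor H (tupleCons i g) = if P g then c else 0 := fun g => by
    simp [P, c, adjTensor, tupleCons_eq_cons, Fin.cons_injective_iff, Fin.image_cons_univ,
      and_comm]
  have hfiber : ∀ e ∈ H.edges, i ∈ e → ∀ g : Fin n → V,
      (P g ∧ insert i (image g univ) = e) ↔
        (Function.Injective g ∧ image g univ = e.erase i) := by
    rintro e he hie g
    constructor
    · rintro ⟨⟨⟨hg, hi⟩, -⟩, rfl⟩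
      exact ⟨hg, (erase_insert hi).symm⟩
    · rintro ⟨hg, himg⟩
      have himg' : insert i (image g univ) = e := by rw [himg, insert_erase hie]
      exact ⟨⟨⟨hg, by simp [himg]⟩, himg' ▸ he⟩, himg'⟩
  calc tApply (adjTensor H) y i
      = ∑ g with P g, c * ∏ j, y (g j) := by
        simp only [tApply, hT, ite_mul, zero_mul, sum_filter]
        congr! 2
    _ = ∑ e ∈ H.edges with i ∈ e, ∑ g with P g ∧ insert i (image g univ) = e,
          c * ∏ j, y (g j) := by
        rw [← sum_fiberwise_of_maps_to (g := fun g => insert i (image g univ))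
          (t := H.edges.filter (i ∈ ·))]
        · simp only [filter_filter]
        · intro g hg
          simp only [mem_filter, mem_univ, true_and] at hg ⊢
          exact ⟨hg.2, mem_insert_self _ _⟩
    -- each edge `e ∋ i` arises from the `(k-1)!` orderings of `e.erase i`
    _ = H.linkSum y i := by
        refine sum_congr rfl fun e he => ?_
        obtain ⟨he, hie⟩ := mem_filter.mp he
        have hcard : (e.erase i).card = n := by rw [card_erase_of_mem hie, H.uniform e he]; rfl
        rw [filter_congr fun g _ => hfiber e he hie g,
          sum_congr rfl fun g hg => show c * ∏ j, y (g j) = c * ∏ v ∈ e.erase i, y v by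
            obtain ⟨hg, himg⟩ := (mem_filter.mp hg).2
            rw [← himg, prod_image fun a _ b _ hab => hg hab],
          sum_const, card_filter_injective_image_eq _ hcard, nsmul_eq_mul, ← mul_assoc,
          mul_inv_cancel₀ (by positivity), one_mul]

end Tensor

section Spectral

variable {V : Type*} [Fintype V] {k : ℕ}

theorem bddAbove_norm_eigenvalues (T : (Fin k → V) → ℝ) :
    BddAbove {r : ℝ | ∃ lam : ℂ, IsEig T lam ∧ ‖lam‖ = r} := by
  refine ⟨Fintype.card (Fin (k - 1) → V) * ∑ f, |T f|, ?_⟩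
  rintro _ ⟨lam, ⟨x, hx0, heig⟩, rfl⟩
  obtain ⟨v, hv⟩ := Function.ne_iff.1 hx0
  have : Nonempty V := ⟨v⟩
  obtain ⟨i, hi⟩ := Finite.exists_max fun i => ‖x i‖
  have hpos : 0 < ‖x i‖ ^ (k - 1) := pow_pos ((norm_pos_iff.2 hv).trans_le (hi v)) _
  refine le_of_mul_le_mul_right ?_ hpos
  calc ‖lam‖ * ‖x i‖ ^ (k - 1) = ‖tApply (fun f => ((T f : ℝ) : ℂ)) x i‖ := by
        rw [heig, norm_mul, norm_pow]
    _ ≤ ∑ g : Fin (k - 1) → V, |T (tupleCons i g)| * ∏ j, ‖x (g j)‖ := by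
        refine (norm_sum_le _ _).trans_eq (sum_congr rfl fun g _ => ?_)
        rw [norm_mul, norm_prod, Complex.norm_real, Real.norm_eq_abs]
    _ ≤ ∑ _g : Fin (k - 1) → V, (∑ f, |T f|) * ‖x i‖ ^ (k - 1) := by
        gcongr with g
        · exact single_le_sum (fun f _ => abs_nonneg (T f)) (mem_univ _)
        · calc ∏ j, ‖x (g j)‖ ≤ ∏ _j : Fin (k - 1), ‖x i‖ :=
                prod_le_prod (fun _ _ => norm_nonneg _) fun j _ => hi (g j)
            _ = ‖x i‖ ^ (k - 1) := by simp
    _ = _ := by simp [mul_assoc]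

theorem isEig_ofReal (T : (Fin k → V) → ℝ) {y : V → ℝ} (hy : y ≠ 0) {r : ℝ}
    (h : ∀ i, tApply T y i = r * y i ^ (k - 1)) : IsEig T r := by
  refine ⟨fun v => y v, fun h0 => hy (funext fun v => by simpa using congrFun h0 v), fun i => ?_⟩
  simpa [tApply] using congrArg ((↑) : ℝ → ℂ) (h i)

theorem le_specRad_of_tApply_eq (T : (Fin k → V) → ℝ) {y : V → ℝ} (hy : y ≠ 0) {r : ℝ}
    (hr : 0 ≤ r) (h : ∀ i, tApply T y i = r * y i ^ (k - 1)) : r ≤ specRad T :=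
  le_csSup (bddAbove_norm_eigenvalues T) ⟨r, isEig_ofReal T hy h, by simp [abs_of_nonneg hr]⟩

end Spectral

section PowerBounds

variable {a b : ℝ}

theorem pow_sub_pow_le_mul (ha : 0 ≤ a) (hab : a ≤ b) (k : ℕ) :
    b ^ k - a ^ k ≤ (b - a) * (k * b ^ (k - 1)) := by
  rw [← geom_sum₂_mul, mul_comm]
  gcongr
  calc ∑ m ∈ range k, b ^ m * a ^ (k - 1 - m) ≤ ∑ m ∈ range k, b ^ m * b ^ (k - 1 - m) := by
        gcongr
        exact pow_nonneg (ha.trans hab) _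
    _ = k * b ^ (k - 1) := by
        rw [sum_congr rfl fun m hm => by
          rw [← pow_add, Nat.add_sub_cancel' (by simp at hm; omega)]]
        simp

theorem mul_le_pow_sub_pow (ha : 0 ≤ a) (hab : a ≤ b) (k : ℕ) :
    (b - a) * (k * a ^ (k - 1)) ≤ b ^ k - a ^ k := by
  rw [← geom_sum₂_mul, mul_comm]
  gcongr
  calc (k : ℝ) * a ^ (k - 1) = ∑ m ∈ range k, a ^ m * a ^ (k - 1 - m) := by
        rw [sum_congr rfl fun m hm => by
          rw [← pow_add, Nat.add_sub_cancel' (by simp at hm; omega)]]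
        simp
    _ ≤ ∑ m ∈ range k, b ^ m * a ^ (k - 1 - m) := by gcongr

end PowerBounds

section Transfer

variable {V : Type*} [DecidableEq V]

def transfer (y : V → ℝ) (i j : V) (s : ℝ) : V → ℝ :=
  Function.update (Function.update y i (y i + s)) j (y j - s)

theorem transfer_nonneg {y : V → ℝ} (hy : 0 ≤ y) {i j : V} {s : ℝ} (hs : 0 ≤ s)
    (hsj : s ≤ y j) : 0 ≤ transfer y i j s := by
  intro v
  have hy' : ∀ v, 0 ≤ y v := hy
  simp only [transfer, Pi.zero_apply, Function.update_apply]
  split_ifs <;> linarith [hy' v, hy' i]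

theorem prod_transfer (e : Finset V) (y : V → ℝ) {i j : V} (hij : i ≠ j) (s : ℝ) :
    ∏ v ∈ e, transfer y i j s v =
      ∏ v ∈ e, y v + s * (if i ∈ e then ∏ v ∈ e.erase i, y v else 0)
        - s * (if j ∈ e then ∏ v ∈ e.erase j, y v else 0)
        - s ^ 2 * (if i ∈ e ∧ j ∈ e then ∏ v ∈ (e.erase i).erase j, y v else 0) := by
  by_cases hi : i ∈ e <;> by_cases hj : j ∈ e <;>
    simp only [transfer, hi, hj, if_true, if_false, and_true, and_false, mul_zero, sub_zero,
      add_zero, prod_update_of_mem, prod_update_of_notMem, sdiff_singleton_eq_erase, mem_erase,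
      ne_eq, hij, not_false_eq_true]
  · rw [← mul_prod_erase e y hi, ← mul_prod_erase _ y (mem_erase.2 ⟨hij.symm, hj⟩),
      ← mul_prod_erase (e.erase j) y (mem_erase.2 ⟨hij, hi⟩), erase_right_comm]
    ring
  · rw [← mul_prod_erase e y hi]
    ring
  · rw [← mul_prod_erase e y hj]
    ring

theorem sum_pow_transfer [Fintype V] (y : V → ℝ) {i j : V} (hij : i ≠ j) (s : ℝ) (n : ℕ) :
    ∑ v, transfer y i j s v ^ n =
      ∑ v, y v ^ n + ((y i + s) ^ n - y i ^ n) - (y j ^ n - (y j - s) ^ n) := by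
  have h := Fintype.sum_eq_add (f := fun v => transfer y i j s v ^ n - y v ^ n) i j hij
    fun v ⟨hvi, hvj⟩ => by simp [transfer, Function.update_of_ne hvi, Function.update_of_ne hvj]
  simp only [transfer, sum_sub_distrib, Function.update_self, Function.update_of_ne hij] at h
  simp only [transfer]
  linarith

end Transfer

theorem sum_pow_pos {V : Type*} [Fintype V] {y : V → ℝ} (hy : 0 ≤ y) {j : V} (hj : 0 < y j)
    (n : ℕ) : 0 < ∑ v, y v ^ n :=
  (pow_pos hj n).trans_le (single_le_sum (fun v _ => pow_nonneg (hy v) n) (mem_univ j))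

namespace UHypergraph

variable {V : Type*} {k : ℕ} (H : UHypergraph V k)

theorem lagrangian_smul (c : ℝ) (y : V → ℝ) :
    H.lagrangian (c • y) = c ^ k * H.lagrangian y := by
  rw [lagrangian, lagrangian, mul_sum]
  refine sum_congr rfl fun e he => ?_
  simp [prod_mul_distrib, H.uniform e he]

theorem lagrangian_nonneg {y : V → ℝ} (hy : 0 ≤ y) : 0 ≤ H.lagrangian y :=
  sum_nonneg fun _ _ => prod_nonneg fun v _ => hy v

theorem exists_forall_lagrangian_le [Fintype V] [Nonempty V] (hk : k ≠ 0) :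
    ∃ y : V → ℝ, 0 ≤ y ∧ ∑ v, y v ^ k = 1 ∧
      ∀ z : V → ℝ, 0 ≤ z → H.lagrangian z ≤ H.lagrangian y * ∑ v, z v ^ k := by
  set S : Set (V → ℝ) := {y | 0 ≤ y ∧ ∑ v, y v ^ k = 1}
  have hS : IsCompact S := by
    refine (isCompact_univ_pi fun _ => isCompact_Icc (a := (0 : ℝ)) (b := 1)).of_isClosed_subset
      ((isClosed_le continuous_const continuous_id).inter
        (isClosed_eq (by fun_prop) continuous_const)) ?_
    rintro y ⟨hy, hy1⟩ v -
    refine ⟨hy v, (pow_le_one_iff_of_nonneg (hy v) hk).1 ?_⟩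
    exact hy1 ▸ single_le_sum (f := fun v => y v ^ k) (fun v _ => pow_nonneg (hy v) k) (mem_univ v)
  have hne : S.Nonempty := by
    classical
    obtain ⟨v0⟩ := ‹Nonempty V›
    refine ⟨Pi.single v0 1, Pi.single_nonneg.2 zero_le_one, ?_⟩
    rw [Fintype.sum_eq_single v0 fun v hv => by simp [hv, hk]]
    simp
  obtain ⟨y, ⟨hy, hy1⟩, hymax⟩ :=
    hS.exists_isMaxOn hne (by unfold lagrangian; fun_prop : Continuous H.lagrangian).continuousOn
  refine ⟨y, hy, hy1, fun z hz => ?_⟩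
  rcases (sum_nonneg fun v _ => pow_nonneg (hz v) k : 0 ≤ ∑ v, z v ^ k).eq_or_lt with hσ | hσ
  · have hz0 : z = (0 : ℝ) • z := by
      funext v
      simpa [hk] using (sum_eq_zero_iff_of_nonneg fun v _ => pow_nonneg (hz v) k).1 hσ.symm v
    rw [← hσ, mul_zero, hz0, lagrangian_smul, zero_pow hk, zero_mul]
  · set σ := ∑ v, z v ^ k
    set c := σ ^ (k : ℝ)⁻¹
    have hc : 0 < c := Real.rpow_pos_of_pos hσ _
    have hck : c ^ k = σ := Real.rpow_inv_natCast_pow hσ.le hk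
    have hw : c⁻¹ • z ∈ S := by
      refine ⟨smul_nonneg (inv_nonneg.2 hc.le) hz, ?_⟩
      simp only [Pi.smul_apply, smul_eq_mul, mul_pow, ← mul_sum, inv_pow, hck]
      exact inv_mul_cancel₀ hσ.ne'
    have : H.lagrangian (c⁻¹ • z) ≤ H.lagrangian y := hymax hw
    rwa [lagrangian_smul, inv_pow, hck, inv_mul_le_iff₀ hσ, mul_comm] at this

variable [DecidableEq V]

theorem linkSum_nonneg {y : V → ℝ} (hy : 0 ≤ y) (i : V) : 0 ≤ H.linkSum y i :=
  sum_nonneg fun _ _ => prod_nonneg fun v _ => hy v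

theorem lagrangian_transfer (y : V → ℝ) {i j : V} (hij : i ≠ j) (s : ℝ) :
    H.lagrangian (transfer y i j s) = H.lagrangian y + s * (H.linkSum y i - H.linkSum y j)
      - s ^ 2 * ∑ e ∈ H.edges with i ∈ e ∧ j ∈ e, ∏ v ∈ (e.erase i).erase j, y v := by
  simp only [lagrangian, linkSum, prod_transfer _ y hij, sum_add_distrib, sum_sub_distrib,
    ← mul_sum, sum_filter]
  ring

variable [Fintype V]

theorem sum_mul_linkSum (y : V → ℝ) : ∑ i, y i * H.linkSum y i = k * H.lagrangian y := by
  simp only [linkSum, lagrangian, mul_sum, sum_filter]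
  rw [sum_comm]
  refine sum_congr rfl fun e he => ?_
  simp_rw [mul_ite, mul_zero]
  rw [sum_ite_mem, univ_inter, sum_congr rfl fun v hv => mul_prod_erase e y hv, sum_const,
    nsmul_eq_mul, H.uniform e he]

theorem lagrangian_eq_of_linkSum_eq (hk : k ≠ 0) {y : V → ℝ} {r : ℝ}
    (h : ∀ i, H.linkSum y i = r * y i ^ (k - 1)) : k * H.lagrangian y = r * ∑ v, y v ^ k := by
  rw [← sum_mul_linkSum, mul_sum]
  exact sum_congr rfl fun i _ => by rw [h, ← mul_pow_sub_one hk]; ring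

theorem linkSum_sub_le_of_forall_le (hk : k ≠ 0) {y : V → ℝ} (hy : 0 ≤ y) {r : ℝ}
    (hmax : ∀ z : V → ℝ, 0 ≤ z → k * H.lagrangian z ≤ r * ∑ v, z v ^ k)
    (hy_eq : k * H.lagrangian y = r * ∑ v, y v ^ k) {i j : V} (hij : i ≠ j) (hj : 0 < y j) :
    H.linkSum y i - r * y i ^ (k - 1) ≤ H.linkSum y j - r * y j ^ (k - 1) := by
  set C := ∑ e ∈ H.edges with i ∈ e ∧ j ∈ e, ∏ v ∈ (e.erase i).erase j, y v
  have hk' : (0 : ℝ) < k := by exact_mod_cast Nat.pos_of_ne_zero hk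
  have hr : 0 ≤ r := by
    have := H.lagrangian_nonneg hy
    nlinarith [sum_pow_pos hy hj k]
  set q : ℝ → ℝ := fun s => r * ((y i + s) ^ (k - 1) - (y j - s) ^ (k - 1)) + s * C
    - (H.linkSum y i - H.linkSum y j)
  -- `hmax` at `transfer y i j s`, divided by `k s`, gives `q s ≥ 0`; then let `s → 0⁺`
  have hq : ∀ s ∈ Set.Ioo 0 (y j), 0 ≤ q s := by
    rintro s ⟨hs, hsj⟩
    have h := hmax (transfer y i j s) (transfer_nonneg hy hs.le hsj.le)
    rw [lagrangian_transfer H y hij, sum_pow_transfer y hij] at h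
    have hi := pow_sub_pow_le_mul (hy i) (le_add_of_nonneg_right hs.le) k
    have hj := mul_le_pow_sub_pow (sub_nonneg.2 hsj.le) (sub_le_self _ hs.le) k
    simp only [add_sub_cancel_left, sub_sub_cancel] at hi hj
    have : 0 ≤ k * s * q s := by nlinarith
    exact (mul_nonneg_iff_of_pos_left (by positivity)).1 this
  have h0 := ge_of_tendsto (((by fun_prop : Continuous q).tendsto 0).mono_left nhdsWithin_le_nhds)
    (Filter.mem_of_superset (Ioo_mem_nhdsGT hj) hq)
  simp only [q, add_zero, sub_zero, zero_mul] at h0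
  linarith

theorem linkSum_eq_of_forall_le (hk : 2 ≤ k) {y : V → ℝ} (hy : 0 ≤ y) (hy0 : y ≠ 0) {r : ℝ}
    (hmax : ∀ z : V → ℝ, 0 ≤ z → k * H.lagrangian z ≤ r * ∑ v, z v ^ k)
    (hy_eq : k * H.lagrangian y = r * ∑ v, y v ^ k) (i : V) :
    H.linkSum y i = r * y i ^ (k - 1) := by
  set g := fun i => H.linkSum y i - r * y i ^ (k - 1)
  have hle : ∀ i j, 0 < y j → g i ≤ g j := fun i j hj => by
    rcases eq_or_ne i j with rfl | hij
    · rfl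
    · exact H.linkSum_sub_le_of_forall_le (by omega) hy hmax hy_eq hij hj
  obtain ⟨j, hj⟩ : ∃ j, 0 < y j := by
    by_contra! h
    exact hy0 (funext fun v => le_antisymm (h v) (hy v))
  -- `g` is constant on the support of `y` and below that constant off it, and `∑ y_i g_i = 0`
  have hsum : ∑ i, y i * g i = 0 := by
    simp only [g, mul_sub, sum_sub_distrib, sum_mul_linkSum, hy_eq, mul_sum, sub_eq_zero]
    exact sum_congr rfl fun i _ => by rw [← mul_pow_sub_one (by omega) (y i)]; ring
  have hgj : g j = 0 := by
    have : ∑ i, y i * g i = (∑ i, y i) * g j := by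
      rw [sum_mul]
      refine sum_congr rfl fun i _ => ?_
      rcases (show 0 ≤ y i from hy i).eq_or_lt with h | h
      · simp [← h]
      · rw [le_antisymm (hle i j hj) (hle j i h)]
    have hpos : 0 < ∑ i, y i := by simpa using sum_pow_pos hy hj 1
    rw [hsum] at this
    exact (mul_eq_zero.1 this.symm).resolve_left hpos.ne'
  have hgi : g i = 0 := by
    rcases (show 0 ≤ y i from hy i).eq_or_lt with h | h
    · refine le_antisymm (hgj ▸ hle i j hj) ?_
      simp only [g, ← h, zero_pow (by omega : k - 1 ≠ 0), mul_zero, sub_zero]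
      exact H.linkSum_nonneg hy i
    · exact le_antisymm (hgj ▸ hle i j hj) (hgj ▸ hle j i h)
  exact sub_eq_zero.1 hgi

theorem lt_hSpecRad_of_le_lagrangian (hk : 2 ≤ k) {x : V → ℝ} (hx : 0 ≤ x) (hx0 : x ≠ 0)
    {r : ℝ} (hr : r * ∑ v, x v ^ k ≤ k * H.lagrangian x) {w : V}
    (hw : H.linkSum x w ≠ r * x w ^ (k - 1)) : r < hSpecRad H := by
  obtain ⟨v, hv⟩ := Function.ne_iff.1 hx0
  have : Nonempty V := ⟨v⟩
  obtain ⟨y, hy, hy1, hymax⟩ := H.exists_forall_lagrangian_le (by omega)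
  set R := k * H.lagrangian y
  have hRmax : ∀ z : V → ℝ, 0 ≤ z → k * H.lagrangian z ≤ R * ∑ v, z v ^ k := fun z hz => by
    rw [mul_assoc]
    gcongr
    exact hymax z hz
  have hy0 : y ≠ 0 := by
    rintro rfl
    simp [zero_pow (by omega : k ≠ 0)] at hy1
  have hrR : r < R := by
    refine (le_of_mul_le_mul_right (hr.trans (hRmax x hx))
      (sum_pow_pos hx ((hx v).lt_of_ne hv.symm) k)).lt_of_ne fun hrR => hw ?_
    subst hrR
    exact H.linkSum_eq_of_forall_le hk hx hx0 hRmax (le_antisymm (hRmax x hx) hr) w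
  refine hrR.trans_le (le_specRad_of_tApply_eq _ hy0
    (mul_nonneg k.cast_nonneg (H.lagrangian_nonneg hy)) fun i => ?_)
  rw [tApply_adjTensor (by omega)]
  exact H.linkSum_eq_of_forall_le hk hy hy0 hRmax (by rw [hy1, mul_one]) i

end UHypergraph

section Relocation

variable {V : Type*} [DecidableEq V] {k : ℕ}

theorem mem_esupp {E : Finset (Finset V)} {v : V} : v ∈ esupp E ↔ ∃ e ∈ E, v ∈ e := by
  simp [esupp]

def relocateEdge (a b : V) (f : Finset V) : Finset V :=
  if b ∈ f then insert a (f.erase b) else f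

structure IsRelocation (G G' : UHypergraph V k) (E2 : Finset (Finset V)) (v1 v2 : V) : Prop where
  subset : E2 ⊆ G.edges
  sep : esupp (G.edges \ E2) ∩ esupp E2 ⊆ {v2}
  notMem : ∀ f ∈ E2, v1 ∉ f
  edges_eq : G'.edges = (G.edges \ E2) ∪ E2.image (relocateEdge v1 v2)

variable {v1 v2 : V} {E2 : Finset (Finset V)}

theorem relocateEdge_of_mem {f : Finset V} (h : v2 ∈ f) :
    relocateEdge v1 v2 f = insert v1 (f.erase v2) := if_pos h

theorem relocateEdge_of_notMem {f : Finset V} (h : v2 ∉ f) : relocateEdge v1 v2 f = f := if_neg h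

theorem mem_relocateEdge_self {f : Finset V} (hv1 : v1 ∉ f) :
    v1 ∈ relocateEdge v1 v2 f ↔ v2 ∈ f := by
  by_cases h : v2 ∈ f <;> simp [relocateEdge_of_mem, relocateEdge_of_notMem, h, hv1]

theorem relocateEdge_injOn (hv1 : ∀ f ∈ E2, v1 ∉ f) : Set.InjOn (relocateEdge v1 v2) E2 := by
  intro f hf g hg hfg
  have hmem := (mem_relocateEdge_self (hv1 f hf)).symm.trans
    (hfg ▸ mem_relocateEdge_self (v2 := v2) (hv1 g hg))
  by_cases h : v2 ∈ f
  · rw [relocateEdge_of_mem h, relocateEdge_of_mem (hmem.1 h)] at hfg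
    have := congrArg (fun s => insert v2 ((s : Finset V).erase v1)) hfg
    simpa [erase_insert fun h' => hv1 f hf (mem_of_mem_erase h'),
      erase_insert fun h' => hv1 g hg (mem_of_mem_erase h'), insert_erase h,
      insert_erase (hmem.1 h)] using this
  · rwa [relocateEdge_of_notMem h, relocateEdge_of_notMem (mt hmem.2 h)] at hfg

variable {G G' : UHypergraph V k}

theorem IsRelocation.disjoint (hk : 2 ≤ k) (h : IsRelocation G G' E2 v1 v2) :
    Disjoint (G.edges \ E2) (E2.image (relocateEdge v1 v2)) := by
  rw [disjoint_right]
  intro _ hfE hGE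
  obtain ⟨f, hf, rfl⟩ := mem_image.1 hfE
  by_cases hv2 : v2 ∈ f
  · obtain ⟨w, hw⟩ : (f.erase v2).Nonempty := by
      rw [← card_pos, card_erase_of_mem hv2, G.uniform f (h.subset hf)]
      omega
    have hw2 : w ∈ esupp (G.edges \ E2) ∩ esupp E2 := mem_inter.2
      ⟨mem_esupp.2 ⟨_, hGE, relocateEdge_of_mem hv2 ▸ mem_insert_of_mem hw⟩,
        mem_esupp.2 ⟨f, hf, mem_of_mem_erase hw⟩⟩
    exact ne_of_mem_erase hw (mem_singleton.1 (h.sep hw2))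
  · rw [relocateEdge_of_notMem hv2] at hGE
    exact (mem_sdiff.1 hGE).2 hf

theorem IsRelocation.sum_edges (hk : 2 ≤ k) (h : IsRelocation G G' E2 v1 v2)
    (F : Finset V → ℝ) :
    ∑ e ∈ G'.edges, F e = ∑ e ∈ G.edges, F e + ∑ f ∈ E2, (F (relocateEdge v1 v2 f) - F f) := by
  rw [h.edges_eq, sum_union (h.disjoint hk), sum_image (relocateEdge_injOn h.notMem),
    sum_sub_distrib, ← sum_sdiff h.subset]
  ring

theorem IsRelocation.lagrangian_le (hk : 2 ≤ k) (h : IsRelocation G G' E2 v1 v2)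
    {x : V → ℝ} (hx : 0 ≤ x) (hle : x v2 ≤ x v1) : G.lagrangian x ≤ G'.lagrangian x := by
  rw [lagrangian, lagrangian, h.sum_edges hk]
  refine le_add_of_nonneg_right (sum_nonneg fun f hf => sub_nonneg.2 ?_)
  by_cases hv2 : v2 ∈ f
  · rw [relocateEdge_of_mem hv2, prod_insert fun h' => h.notMem f hf (mem_of_mem_erase h'),
      ← mul_prod_erase f x hv2]
    exact mul_le_mul_of_nonneg_right hle (prod_nonneg fun v _ => hx v)
  · rw [relocateEdge_of_notMem hv2]

theorem IsRelocation.linkSum_eq (hk : 2 ≤ k) (h : IsRelocation G G' E2 v1 v2) (x : V → ℝ) :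
    G'.linkSum x v1 = G.linkSum x v1 + ∑ f ∈ E2 with v2 ∈ f, ∏ v ∈ f.erase v2, x v := by
  rw [linkSum, linkSum, sum_filter, sum_filter, h.sum_edges hk, sum_filter]
  refine congrArg _ (sum_congr rfl fun f hf => ?_)
  have hv1 := h.notMem f hf
  by_cases hv2 : v2 ∈ f
  · simp [relocateEdge_of_mem hv2, hv2, hv1, erase_insert fun h' => hv1 (mem_of_mem_erase h')]
  · simp [relocateEdge_of_notMem hv2, hv2]

end Relocation

theorem relocation_general {V : Type*} [Fintype V] [DecidableEq V] {k : ℕ} (hk : 3 ≤ k)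
    (G G' : UHypergraph V k) (v1 v2 : V)
    (E2 : Finset (Finset V)) (hE2 : E2 ⊆ G.edges)
    (hsep : esupp (G.edges \ E2) ∩ esupp E2 ⊆ {v2})
    (hv2' : v2 ∈ esupp E2) (hv1' : v1 ∉ esupp E2)
    (hG' : G'.edges = (G.edges \ E2) ∪
      E2.image (fun f => if v2 ∈ f then insert v1 (f.erase v2) else f))
    (x : V → ℝ) (hx : IsPerron G x) (hle : x v2 ≤ x v1) :
    hSpecRad G < hSpecRad G' := by
  obtain ⟨hxpos, hxeig⟩ := hx
  have hk2 : 2 ≤ k := by omega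
  have hreloc : IsRelocation G G' E2 v1 v2 :=
    ⟨hE2, hsep, fun f hf h => hv1' (mem_esupp.2 ⟨f, hf, h⟩), hG'⟩
  have hlink : ∀ i, G.linkSum x i = hSpecRad G * x i ^ (k - 1) := fun i =>
    (tApply_adjTensor (by omega) G x i).symm.trans (hxeig i)
  obtain ⟨f, hf, hv2f⟩ := mem_esupp.1 hv2'
  refine G'.lt_hSpecRad_of_le_lagrangian hk2 (fun v => (hxpos v).le)
    (fun h => (hxpos v1).ne' (congrFun h v1)) ?_ (w := v1) ?_
  · rw [← G.lagrangian_eq_of_linkSum_eq (by omega) hlink]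
    gcongr
    exact hreloc.lagrangian_le hk2 (fun v => (hxpos v).le) hle
  · rw [hreloc.linkSum_eq hk2, hlink]
    exact (lt_add_of_pos_right _ (sum_pos (fun g _ => prod_pos fun v _ => hxpos v)
      ⟨f, mem_filter.2 ⟨hf, hv2f⟩⟩)).ne'

/-- (Relocation.) Let `G = G₁(v₂) * G₂(u)` and
`G' = G₁(v₁) * G₂(u)`, i.e. `G'` is obtained from the connected hypergraph `G`
by relocating the sub-hypergraph with edge set `E₂` (meeting the rest of `G`
only in `v₂`) from `v₂` to `v₁`. If some Perron vector `x` of `G` satisfies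
`x v₁ ≥ x v₂`, then `ρ(G') > ρ(G)`. -/
theorem relocation {V : Type*} [Fintype V] [DecidableEq V] {k : ℕ} (hk : 3 ≤ k)
    (G G' : UHypergraph V k) (v1 v2 : V) (hne : v1 ≠ v2)
    (E2 : Finset (Finset V)) (hE2 : E2 ⊆ G.edges) (hE2ne : E2.Nonempty)
    (hsep : esupp (G.edges \ E2) ∩ esupp E2 ⊆ {v2})
    (hv1 : v1 ∈ esupp (G.edges \ E2)) (hv2 : v2 ∈ esupp (G.edges \ E2))
    (hv2' : v2 ∈ esupp E2) (hv1' : v1 ∉ esupp E2)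
    (hG' : G'.edges = (G.edges \ E2) ∪
      E2.image (fun f => if v2 ∈ f then insert v1 (f.erase v2) else f))
    (hGc : G.Connected) (hG'c : G'.Connected)
    (x : V → ℝ) (hx : IsPerron G x) (hle : x v2 ≤ x v1) :
    hSpecRad G < hSpecRad G' :=
  relocation_general hk G G' v1 v2 E2 hE2 hsep hv2' hv1' hG' x hx hle
end
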